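/- Fix an integer n ≥ 3 and a real l satisfying the admissibility condition 2·sin(π/(2n)) < l < 2·sin(π/n), and set x_max := √(1 − l²/(4·sin²(π/n))). Define f(x) := √(1−x²)·sin(n·arcsin(l/(2·√(1−x²)))) for x ∈ [0, x_max]. Then f is well defined (i.e. l/(2·√(1−x²)) ≤ 1 for all x ∈ [0, x_max]), f is strictly decreasing on [0, x_max], f(0) = sin(n·arcsin(l/2)), and f(x_max) = 0. (Thus as the height x of an n-gonal Goldberg dipyramid increases from 0 to x_max, its aperture decreases from sin(n·arcsin(l/2)) to 0; the Goldberg dipyramid is flexible.) -/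

import Mathlib

/-- The aperture of an `n`-gonal Goldberg dipyramid with faces congruent to
`Δ(l)`, as a function of its height `x`. -/
noncomputable def aperture (n : ℕ) (l x : ℝ) : ℝ :=
  Real.sqrt (1 - x ^ 2) *
    Real.sin (n * Real.arcsin (l / (2 * Real.sqrt (1 - x ^ 2))))

/-- The maximal height of an `n`-gonal Goldberg dipyramid with faces `Δ(l)`. -/
noncomputable def xMax (n : ℕ) (l : ℝ) : ℝ :=
  Real.sqrt (1 - l ^ 2 / (4 * Real.sin (Real.pi / n) ^ 2))

/-!
The equatorial vertices of a dipyramid of height `x` lie on a circle of radius `ρ = √(1 - x²)`,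
and each edge `l` of the equator subtends the angle `2θ` with `sin θ = l / (2ρ)`. Hence the
aperture is `ρ sin (nθ) = (l / 2) · sin (nθ) / sin θ`. As `x` grows from `0` to `x_max`, `ρ`
decreases from `1` to `l / (2 sin (π/n))`, so `θ` increases from `arcsin (l/2) > π/(2n)` to `π/n`;
on `[π/(2n), π/n]` the numerator `sin (nθ) ≥ 0` strictly decreases while `sin θ > 0` increases.
-/

open Real Set

lemma sin_lt_sin_of_pi_div_two_le_of_le_pi {x y : ℝ} (hx : π / 2 ≤ x) (hy : y ≤ π) (hxy : x < y) :
    sin y < sin x := by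
  rw [← sin_pi_sub x, ← sin_pi_sub y]
  exact sin_lt_sin_of_lt_of_le_pi_div_two (by linarith) (by linarith) (by linarith)

lemma sin_mul_div_sin_strictAntiOn {c : ℝ} (hc : 2 ≤ c) :
    StrictAntiOn (fun θ => sin (c * θ) / sin θ) (Icc (π / (2 * c)) (π / c)) := by
  rintro a ⟨ha, -⟩ b ⟨-, hb⟩ hab
  have hc0 : 0 < c := by linarith
  have ha0 : 0 < a := lt_of_lt_of_le (by positivity) ha
  have hb2 : b ≤ π / 2 := hb.trans (div_le_div_of_nonneg_left pi_pos.le two_pos hc)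
  have hca : π / 2 ≤ c * a := by linarith [(div_le_iff₀ (by positivity)).1 ha]
  have hcb : c * b ≤ π := by linarith [(le_div_iff₀ hc0).1 hb]
  have hsin_a : 0 < sin a := sin_pos_of_pos_of_lt_pi ha0 (by linarith)
  have hsin_ab : sin a < sin b := sin_lt_sin_of_lt_of_le_pi_div_two (by linarith) hb2 hab
  have hnum_ab : sin (c * b) < sin (c * a) :=
    sin_lt_sin_of_pi_div_two_le_of_le_pi hca hcb (mul_lt_mul_of_pos_left hab hc0)
  have hnum_b : 0 ≤ sin (c * b) := sin_nonneg_of_nonneg_of_le_pi (by nlinarith) hcb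
  calc sin (c * b) / sin b ≤ sin (c * b) / sin a :=
        div_le_div_of_nonneg_left hnum_b hsin_a hsin_ab.le
    _ < sin (c * a) / sin a := div_lt_div_of_pos_right hnum_ab hsin_a

lemma div_two_mul_mem_Icc {l S ρ : ℝ} (hl : 0 < l) (hS : 0 < S) (hρ : ρ ∈ Icc (l / (2 * S)) 1) :
    l / (2 * ρ) ∈ Icc (l / 2) S := by
  have hρ0 : 0 < ρ := lt_of_lt_of_le (by positivity) hρ.1
  refine ⟨div_le_div_of_nonneg_left hl.le (by positivity) (by linarith [hρ.2]), ?_⟩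
  rw [div_le_iff₀ (by positivity)]
  have := (div_le_iff₀ (by positivity : 0 < 2 * S)).mp hρ.1
  linarith

section

variable {c l : ℝ}

lemma sin_pi_div_pos (hc : 2 ≤ c) : 0 < sin (π / c) :=
  sin_pos_of_pos_of_lt_pi (div_pos pi_pos (by linarith))
    ((div_le_div_of_nonneg_left pi_pos.le two_pos hc).trans_lt (half_lt_self pi_pos))

lemma pos_of_two_mul_sin_pi_div_two_mul_le (hc : 2 ≤ c) (hl : 2 * sin (π / (2 * c)) ≤ l) :
    0 < l :=
  (mul_pos two_pos (sin_pi_div_pos (by linarith))).trans_le hl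

noncomputable def apertureOfRadius (c l ρ : ℝ) : ℝ :=
  ρ * sin (c * arcsin (l / (2 * ρ)))

lemma apertureOfRadius_eq_mul_sin_mul_div_sin (hl : l ≠ 0) {ρ : ℝ} (hρ : ρ ≠ 0) (h : l / (2 * ρ) ∈ Icc (-1) 1) :
    apertureOfRadius c l ρ =
      l / 2 * (sin (c * arcsin (l / (2 * ρ))) / sin (arcsin (l / (2 * ρ)))) := by
  rw [apertureOfRadius, sin_arcsin h.1 h.2]
  field_simp

lemma arcsin_div_two_mul_mem_Icc (hc : 2 ≤ c) (hl : 2 * sin (π / (2 * c)) ≤ l) {ρ : ℝ}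
    (hρ : ρ ∈ Icc (l / (2 * sin (π / c))) 1) :
    arcsin (l / (2 * ρ)) ∈ Icc (π / (2 * c)) (π / c) := by
  have hπc : 0 < π / c := div_pos pi_pos (by linarith)
  have hπc_le : π / c ≤ π / 2 := div_le_div_of_nonneg_left pi_pos.le two_pos hc
  have hπ2c_le : π / (2 * c) ≤ π / c := div_le_div_of_nonneg_left pi_pos.le (by linarith) (by linarith)
  have hπ2c : 0 < π / (2 * c) := div_pos pi_pos (by linarith)
  obtain ⟨hlower, hupper⟩ :=
    div_two_mul_mem_Icc (pos_of_two_mul_sin_pi_div_two_mul_le hc hl) (sin_pi_div_pos hc) hρ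
  constructor
  · calc π / (2 * c) = arcsin (sin (π / (2 * c))) :=
          (arcsin_sin (by linarith [pi_pos]) (hπ2c_le.trans hπc_le)).symm
      _ ≤ arcsin (l / (2 * ρ)) := monotone_arcsin (by linarith)
  · calc arcsin (l / (2 * ρ)) ≤ arcsin (sin (π / c)) := monotone_arcsin hupper
      _ = π / c := arcsin_sin (by linarith [pi_pos]) hπc_le

lemma apertureOfRadius_strictMonoOn (hc : 2 ≤ c) (hl : 2 * sin (π / (2 * c)) ≤ l) :
    StrictMonoOn (apertureOfRadius c l) (Icc (l / (2 * sin (π / c))) 1) := by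
  have hl0 := pos_of_two_mul_sin_pi_div_two_mul_le hc hl
  have hmem : ∀ ρ ∈ Icc (l / (2 * sin (π / c))) 1, 0 < ρ ∧ l / (2 * ρ) ∈ Icc (-1) 1 := by
    intro ρ hρ
    have hbounds := div_two_mul_mem_Icc hl0 (sin_pi_div_pos hc) hρ
    exact ⟨lt_of_lt_of_le (div_pos hl0 (mul_pos two_pos (sin_pi_div_pos hc))) hρ.1,
      by linarith [hbounds.1], hbounds.2.trans (sin_le_one _)⟩
  intro ρ₁ h₁ ρ₂ h₂ hρ
  obtain ⟨hρ₁, hs₁⟩ := hmem ρ₁ h₁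
  obtain ⟨hρ₂, hs₂⟩ := hmem ρ₂ h₂
  have hθ : arcsin (l / (2 * ρ₂)) < arcsin (l / (2 * ρ₁)) :=
    strictMonoOn_arcsin hs₂ hs₁ (div_lt_div_of_pos_left hl0 (by positivity) (by linarith))
  rw [apertureOfRadius_eq_mul_sin_mul_div_sin hl0.ne' hρ₁.ne' hs₁, apertureOfRadius_eq_mul_sin_mul_div_sin hl0.ne' hρ₂.ne' hs₂]
  exact mul_lt_mul_of_pos_left (sin_mul_div_sin_strictAntiOn hc
    (arcsin_div_two_mul_mem_Icc hc hl h₂) (arcsin_div_two_mul_mem_Icc hc hl h₁) hθ) (by positivity)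

lemma apertureOfRadius_circumradius (hc : 2 ≤ c) (hl : l ≠ 0) :
    apertureOfRadius c l (l / (2 * sin (π / c))) = 0 := by
  have hsin := sin_pi_div_pos hc
  have hπc : 0 < π / c := div_pos pi_pos (by linarith)
  have hradius : l / (2 * (l / (2 * sin (π / c)))) = sin (π / c) := by field_simp
  rw [apertureOfRadius, hradius, arcsin_sin (by linarith [pi_pos])
    (div_le_div_of_nonneg_left pi_pos.le two_pos hc), mul_div_cancel₀ _ (by linarith), sin_pi,
    mul_zero]

end

lemma sqrt_one_sub_sq_strictAntiOn : StrictAntiOn (fun x : ℝ => √(1 - x ^ 2)) (Icc 0 1) := by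
  rintro x ⟨hx, -⟩ y ⟨-, hy⟩ hxy
  exact sqrt_lt_sqrt (by nlinarith) (by nlinarith)

lemma mapsTo_sqrt_one_sub_sq {K : ℝ} (hK : 0 ≤ K) (hK1 : K ≤ 1) :
    MapsTo (fun x : ℝ => √(1 - x ^ 2)) (Icc 0 √(1 - K ^ 2)) (Icc K 1) := by
  rintro x ⟨hx, hxK⟩
  have hx2 : x ^ 2 ≤ 1 - K ^ 2 := by
    simpa [sq_sqrt (by nlinarith : 0 ≤ 1 - K ^ 2)] using pow_le_pow_left₀ hx hxK 2
  exact ⟨(le_sqrt hK (by nlinarith)).2 (by linarith), sqrt_le_one.2 (by nlinarith)⟩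

lemma xMax_eq (n : ℕ) (l : ℝ) : xMax n l = √(1 - (l / (2 * sin (π / n))) ^ 2) := by
  rw [xMax, div_pow, mul_pow]
  norm_num

lemma xMax_le_one (n : ℕ) (l : ℝ) : xMax n l ≤ 1 :=
  sqrt_le_one.2 (sub_le_self _ (by positivity))

/-- Goldberg dipyramids are flexible: as the height increases from `0` to
`x_max`, the aperture strictly decreases from `sin (n · arcsin (l/2))` to `0`. -/
theorem goldberg_dipyramid_flexible (n : ℕ) (hn : 3 ≤ n) (l : ℝ)
    (hl₁ : 2 * Real.sin (Real.pi / (2 * n)) < l)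
    (hl₂ : l < 2 * Real.sin (Real.pi / n)) :
    (∀ x ∈ Set.Icc (0:ℝ) (xMax n l), l / (2 * Real.sqrt (1 - x ^ 2)) ≤ 1) ∧
    StrictAntiOn (aperture n l) (Set.Icc 0 (xMax n l)) ∧
    aperture n l 0 = Real.sin (n * Real.arcsin (l / 2)) ∧
    aperture n l (xMax n l) = 0 := by
  have hc : (2 : ℝ) ≤ n := by exact_mod_cast (by omega : 2 ≤ n)
  have hsin := sin_pi_div_pos hc
  have hl := pos_of_two_mul_sin_pi_div_two_mul_le hc hl₁.le
  set K := l / (2 * sin (π / n)) with hK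
  have hK0 : 0 < K := div_pos hl (mul_pos two_pos hsin)
  have hK1 : K ≤ 1 := by rw [hK, div_le_one (by positivity)]; linarith
  have hradius : MapsTo (fun x : ℝ => √(1 - x ^ 2)) (Icc 0 (xMax n l)) (Icc K 1) := by
    rw [xMax_eq]; exact mapsTo_sqrt_one_sub_sq hK0.le hK1
  refine ⟨fun x hx => ?_, ?_, by simp [aperture], ?_⟩
  · exact (div_two_mul_mem_Icc hl hsin (hradius hx)).2.trans (sin_le_one _)
  · exact (apertureOfRadius_strictMonoOn hc hl₁.le).comp_strictAntiOn
      (sqrt_one_sub_sq_strictAntiOn.mono (Icc_subset_Icc_right (xMax_le_one n l))) hradius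
  · have hradius_xMax : √(1 - xMax n l ^ 2) = K := by
      rw [xMax_eq, sq_sqrt (by nlinarith), sub_sub_cancel, sqrt_sq hK0.le]
    exact (congrArg (apertureOfRadius n l) hradius_xMax).trans
      (apertureOfRadius_circumradius hc hl.ne')
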